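/- arXiv:2207.06016 — 2 statements merged into one kernel-verified Lean document; each statement's English description precedes it below -/
import Mathlib

section
/- Let A be an n×n irreducible nonnegative real matrix (n ≥ 2) with entries a_{i,j}, and let x ∈ ℝ^n have all entries positive. Suppose x is not a Perron vector of A. (i) If min_{1≤i≤n} (A²x)_i/(Ax)_i ≥ (Ax)_j/x_j for every j ∈ {1,…,n}, then min_{1≤i≤n} (A²x)_i/(Ax)_i > min_{1≤i≤n} (Ax)_i/x_i. (ii) If there exist indices i_0, j_0 ∈ {1,…,n} such that (Ax)_{j_0}/x_{j_0} > min_{1≤i≤n} (A²x)_i/(Ax)_i = (A²x)_{i_0}/(Ax)_{i_0} and a_{i_0,j_0} ≠ 0, then min_{1≤i≤n} (A²x)_i/(Ax)_i > min_{1≤i≤n} (Ax)_i/x_i. -/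
/-
Write `m = min_i (Ax)_i / x_i` and `M = min_i (A²x)_i / (Ax)_i`. Since `m x ≤ Ax` entrywise and
`A ≥ 0`, applying `A` gives `m Ax ≤ A²x`, so `m ≤ M`. Under (i), equality `M = m` would force
every ratio `(Ax)_j / x_j` to equal `m`, i.e. `Ax = m x`; a positive eigenvector of a nonnegative
matrix belongs to its spectral radius (Collatz–Wielandt), so `x` would be a Perron vector. Under
(ii), `m x_{j₀} < (Ax)_{j₀}` and `a_{i₀ j₀} > 0` make the inequality `m (Ax)_{i₀} ≤ (A²x)_{i₀}`
strict, so `m < (A²x)_{i₀} / (Ax)_{i₀} = M`.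
-/

open Matrix

/-- A square matrix is irreducible if no permutation similarity puts it in block
upper triangular form; equivalently, for every nonempty proper subset `S` of indices
there are `i ∈ S` and `j ∉ S` with `A i j ≠ 0`. -/
def IsIrreducibleMatrix {n : ℕ} (A : Matrix (Fin n) (Fin n) ℝ) : Prop :=
  ∀ S : Finset (Fin n), S.Nonempty → S ≠ Finset.univ → ∃ i ∈ S, ∃ j, j ∉ S ∧ A i j ≠ 0

/-- The Perron value (spectral radius) of a real square matrix: the supremum of the
absolute values of its complex eigenvalues (roots of the characteristic polynomial). -/
noncomputable def perronValue {n : ℕ} (A : Matrix (Fin n) (Fin n) ℝ) : ℝ :=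
  sSup {r : ℝ | ∃ μ : ℂ, ((A.map Complex.ofReal).charpoly).IsRoot μ ∧ r = ‖μ‖}

/-- A Perron vector of `A`: an eigenvector associated with the Perron value of `A`. -/
def IsPerronVector {n : ℕ} (A : Matrix (Fin n) (Fin n) ℝ) (x : Fin n → ℝ) : Prop :=
  x ≠ 0 ∧ A.mulVec x = perronValue A • x

section

variable {ι : Type*} [Fintype ι] {x : ι → ℝ}

theorem iInf_div_smul_le (hx : ∀ i, 0 < x i) (u : ι → ℝ) : (⨅ j, u j / x j) • x ≤ u :=
  fun i => (le_div_iff₀ (hx i)).1 (ciInf_le (Finite.bddBelow_range _) i)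

theorem eq_iInf_div_smul_of_forall_div_le (hx : ∀ i, 0 < x i) {u : ι → ℝ}
    (hu : ∀ j, u j / x j ≤ ⨅ i, u i / x i) : u = (⨅ i, u i / x i) • x :=
  funext fun j => (div_eq_iff (hx j).ne').1
    ((hu j).antisymm (ciInf_le (Finite.bddBelow_range _) j))

end

namespace Matrix

variable {ι : Type*} [Fintype ι]

theorem isRoot_charpoly_iff_exists_mulVec_eq_smul {K : Type*} [Field K] [DecidableEq ι]
    (B : Matrix ι ι K) (μ : K) : B.charpoly.IsRoot μ ↔ ∃ v ≠ 0, B *ᵥ v = μ • v := by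
  simp only [Polynomial.IsRoot, eval_charpoly, ← exists_mulVec_eq_zero_iff, sub_mulVec,
    sub_eq_zero, eq_comm (b := B *ᵥ _)]
  simp [scalar_apply]

variable {A : Matrix ι ι ℝ} {x : ι → ℝ}

theorem mulVec_apply_le_of_nonneg (hA : ∀ i j, 0 ≤ A i j) {u v : ι → ℝ} (huv : u ≤ v) (i : ι) :
    (A *ᵥ u) i ≤ (A *ᵥ v) i :=
  dotProduct_le_dotProduct_of_nonneg_left huv (hA i)

theorem mulVec_apply_lt_of_nonneg (hA : ∀ i j, 0 ≤ A i j) {u v : ι → ℝ} (huv : u ≤ v) {i j : ι}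
    (hij : A i j ≠ 0) (hj : u j < v j) : (A *ᵥ u) i < (A *ᵥ v) i :=
  Finset.sum_lt_sum (fun k _ => mul_le_mul_of_nonneg_left (huv k) (hA i k))
    ⟨j, Finset.mem_univ j, mul_lt_mul_of_pos_left hj ((hA i j).lt_of_ne' hij)⟩

theorem norm_map_ofReal_mulVec_apply_le (hA : ∀ i j, 0 ≤ A i j) (v : ι → ℂ) (i : ι) :
    ‖(A.map Complex.ofReal *ᵥ v) i‖ ≤ (A *ᵥ fun j => ‖v j‖) i := by
  refine (norm_sum_le _ _).trans_eq (Finset.sum_congr rfl fun j _ => ?_)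
  simp [abs_of_nonneg (hA i j)]

theorem norm_le_of_mulVec_eq_smul (hA : ∀ i j, 0 ≤ A i j) (hx : ∀ i, 0 < x i) {r : ℝ}
    (hAx : A *ᵥ x = r • x) {μ : ℂ} {v : ι → ℂ} (hv : v ≠ 0)
    (hμ : A.map Complex.ofReal *ᵥ v = μ • v) : ‖μ‖ ≤ r := by
  obtain ⟨k, hk⟩ := Function.ne_iff.1 hv
  have : Nonempty ι := ⟨k⟩
  obtain ⟨i, hi⟩ := Finite.exists_max fun j => ‖v j‖ / x j
  set c := ‖v i‖ / x i
  have hvc : (fun j => ‖v j‖) ≤ c • x := fun j => (div_le_iff₀ (hx j)).1 (hi j)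
  have hc : 0 < c := (pos_iff_pos_of_mul_pos ((norm_pos_iff.2 hk).trans_le (hvc k))).2 (hx k)
  have hvi : ‖v i‖ = c * x i := (div_mul_cancel₀ _ (hx i).ne').symm
  refine le_of_mul_le_mul_right ?_ (hvi ▸ mul_pos hc (hx i))
  calc ‖μ‖ * ‖v i‖ = ‖(A.map Complex.ofReal *ᵥ v) i‖ := by simp [hμ]
    _ ≤ (A *ᵥ fun j => ‖v j‖) i := norm_map_ofReal_mulVec_apply_le hA v i
    _ ≤ (A *ᵥ (c • x)) i := mulVec_apply_le_of_nonneg hA hvc i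
    _ = r * ‖v i‖ := by rw [mulVec_smul, hAx, hvi]; simp only [Pi.smul_apply, smul_eq_mul]; ring

theorem iInf_div_le_div_mulVec (hA : ∀ i j, 0 ≤ A i j) (hx : ∀ i, 0 < x i) (i : ι) :
    ⨅ j, (A *ᵥ x) j / x j ≤ (A *ᵥ (A *ᵥ x)) i / (A *ᵥ x) i := by
  set m := ⨅ j, (A *ᵥ x) j / x j
  have hmy : m * (A *ᵥ x) i ≤ (A *ᵥ (A *ᵥ x)) i := by
    simpa [mulVec_smul] using mulVec_apply_le_of_nonneg hA (iInf_div_smul_le hx (A *ᵥ x)) i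
  have hy : 0 ≤ (A *ᵥ x) i := by
    simpa using mulVec_apply_le_of_nonneg hA (u := 0) (fun j => (hx j).le) i
  rcases hy.eq_or_lt with hy0 | hy0
  · -- a zero row of `A` makes both ratios at `i` vanish (with `a / 0 = 0`)
    rw [← hy0, div_zero]
    simpa [← hy0] using ciInf_le (Finite.bddBelow_range fun j => (A *ᵥ x) j / x j) i
  · exact (le_div_iff₀ hy0).2 hmy

theorem iInf_div_lt_div_mulVec (hA : ∀ i j, 0 ≤ A i j) (hx : ∀ i, 0 < x i) {i j : ι}
    (hij : A i j ≠ 0) (hj : ⨅ k, (A *ᵥ x) k / x k < (A *ᵥ x) j / x j) :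
    ⨅ k, (A *ᵥ x) k / x k < (A *ᵥ (A *ᵥ x)) i / (A *ᵥ x) i := by
  have hy : 0 < (A *ᵥ x) i := by
    simpa using mulVec_apply_lt_of_nonneg hA (u := 0) (fun k => (hx k).le) hij (hx j)
  refine (lt_div_iff₀ hy).2 ?_
  simpa [mulVec_smul] using
    mulVec_apply_lt_of_nonneg hA (iInf_div_smul_le hx (A *ᵥ x)) hij ((lt_div_iff₀ (hx j)).1 hj)

end Matrix

theorem perronValue_eq_of_mulVec_eq_smul {n : ℕ} {A : Matrix (Fin n) (Fin n) ℝ}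
    (hA : ∀ i j, 0 ≤ A i j) {x : Fin n → ℝ} (hx : ∀ i, 0 < x i) (hx0 : x ≠ 0) {r : ℝ}
    (hAx : A *ᵥ x = r • x) : perronValue A = r := by
  have hbound : ∀ μ : ℂ, (A.map Complex.ofReal).charpoly.IsRoot μ → ‖μ‖ ≤ r := fun μ hμ => by
    obtain ⟨v, hv, hμ⟩ := (isRoot_charpoly_iff_exists_mulVec_eq_smul _ μ).1 hμ
    exact norm_le_of_mulVec_eq_smul hA hx hAx hv hμ
  have hroot : (A.map Complex.ofReal).charpoly.IsRoot r := by
    refine (isRoot_charpoly_iff_exists_mulVec_eq_smul _ _).2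
      ⟨Complex.ofReal ∘ x, fun h => hx0 (funext fun i => by simpa using congrFun h i), ?_⟩
    funext i
    exact (Complex.ofRealHom.map_mulVec A x i).symm.trans (by simp [hAx])
  -- `‖(r : ℂ)‖ = |r|` is both attained and an upper bound, which forces `|r| = r`.
  have hr : |r| ≤ r := by simpa using hbound r hroot
  rw [perronValue, ← abs_of_nonneg ((abs_nonneg r).trans hr)]
  refine IsGreatest.csSup_eq ⟨⟨r, hroot, by simp⟩, ?_⟩
  rintro _ ⟨μ, hμ, rfl⟩
  exact (hbound μ hμ).trans (le_abs_self r)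

theorem min_ratio_strict_increase_general {n : ℕ} (hn : 2 ≤ n)
    (A : Matrix (Fin n) (Fin n) ℝ) (x : Fin n → ℝ)
    (hnonneg : ∀ i j, 0 ≤ A i j) (hx : ∀ i, 0 < x i)
    (hnp : ¬ IsPerronVector A x) :
    ((∀ j, A.mulVec x j / x j ≤ ⨅ i, A.mulVec (A.mulVec x) i / A.mulVec x i) →
      (⨅ i, A.mulVec x i / x i) < ⨅ i, A.mulVec (A.mulVec x) i / A.mulVec x i) ∧
    (∀ i₀ j₀ : Fin n,
      (⨅ i, A.mulVec (A.mulVec x) i / A.mulVec x i) < A.mulVec x j₀ / x j₀ →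
      (⨅ i, A.mulVec (A.mulVec x) i / A.mulVec x i)
          = A.mulVec (A.mulVec x) i₀ / A.mulVec x i₀ →
      A i₀ j₀ ≠ 0 →
      (⨅ i, A.mulVec x i / x i) < ⨅ i, A.mulVec (A.mulVec x) i / A.mulVec x i) := by
  have i : Fin n := ⟨0, by omega⟩
  have : Nonempty (Fin n) := ⟨i⟩
  have hmin_le := le_ciInf (iInf_div_le_div_mulVec hnonneg hx)
  refine ⟨fun hall => hmin_le.lt_of_ne fun heq => hnp ?_,
    fun i₀ j₀ hj₀ hi₀ hij => hmin_le.lt_of_ne fun heq => ?_⟩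
  · have hx0 : x ≠ 0 := fun h => (hx i).ne' (congrFun h i)
    have hAx := eq_iInf_div_smul_of_forall_div_le hx fun j => (hall j).trans heq.ge
    exact ⟨hx0, by rwa [perronValue_eq_of_mulVec_eq_smul hnonneg hx hx0 hAx]⟩
  · rw [← heq] at hj₀
    exact (hi₀ ▸ heq ▸ iInf_div_lt_div_mulVec hnonneg hx hij hj₀).false

/-- Let `A` be `n × n` (`n ≥ 2`) irreducible and nonnegative, `x` entrywise
positive and not a Perron vector of `A`.
(i) If `min_i (A²x)_i/(Ax)_i ≥ (Ax)_j/x_j` for every `j`, then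
`min_i (A²x)_i/(Ax)_i > min_i (Ax)_i/x_i`.
(ii) If there are indices `i₀, j₀` with
`(Ax)_{j₀}/x_{j₀} > min_i (A²x)_i/(Ax)_i = (A²x)_{i₀}/(Ax)_{i₀}` and `A i₀ j₀ ≠ 0`, then
`min_i (A²x)_i/(Ax)_i > min_i (Ax)_i/x_i`. -/
theorem min_ratio_strict_increase {n : ℕ} (hn : 2 ≤ n)
    (A : Matrix (Fin n) (Fin n) ℝ) (x : Fin n → ℝ)
    (hirr : IsIrreducibleMatrix A) (hnonneg : ∀ i j, 0 ≤ A i j) (hx : ∀ i, 0 < x i)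
    (hnp : ¬ IsPerronVector A x) :
    ((∀ j, A.mulVec x j / x j ≤ ⨅ i, A.mulVec (A.mulVec x) i / A.mulVec x i) →
      (⨅ i, A.mulVec x i / x i) < ⨅ i, A.mulVec (A.mulVec x) i / A.mulVec x i) ∧
    (∀ i₀ j₀ : Fin n,
      (⨅ i, A.mulVec (A.mulVec x) i / A.mulVec x i) < A.mulVec x j₀ / x j₀ →
      (⨅ i, A.mulVec (A.mulVec x) i / A.mulVec x i)
          = A.mulVec (A.mulVec x) i₀ / A.mulVec x i₀ →
      A i₀ j₀ ≠ 0 →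
      (⨅ i, A.mulVec x i / x i) < ⨅ i, A.mulVec (A.mulVec x) i / A.mulVec x i) :=
  min_ratio_strict_increase_general hn A x hnonneg hx hnp
end

section
/- Let A be an n×n real matrix with all entries positive and let x ∈ ℝ^n have all entries positive. If A^r x is not a Perron vector of A for every integer r ≥ 0, then the sequence (a_k(A,x))_{k≥1} is strictly decreasing, the sequence (b_k(A,x))_{k≥1} is strictly increasing, and both sequences converge to the Perron value ρ(A). -/
/-!
The ratios `maxRatio A y = max_i (A y)_i / y_i` and `minRatio A y` improve under `y ↦ A y`:
with `a = maxRatio A y` the gap `a • y - A y` is nonnegative, and a positive matrix makes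
`A (a • y - A y)` entrywise positive unless the gap vanishes, so `maxRatio A (A y) < a` unless
`y` is an eigenvector. Along `A ^ k x` both ratios are thus monotone and converge. Since they are
continuous at positive vectors, `w = A v` for a limit point `v` of the normalised iterates has
`maxRatio A (A w) = maxRatio A w`, so it is an eigenvector for the upper limit, and likewise for
the lower one; the two limits agree. The Collatz–Wielandt bound `‖μ‖ ≤ maxRatio A y` for complex
eigenvalues `μ` identifies the eigenvalue of a positive eigenvector with the Perron value.
-/

open Matrix Filter

/-- `a_k(A,x) = max_i (A^k x)_i / (A^{k-1} x)_i` for `k ≥ 1`. -/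
noncomputable def aSeq {n : ℕ} (A : Matrix (Fin n) (Fin n) ℝ) (x : Fin n → ℝ) (k : ℕ) : ℝ :=
  ⨆ i, ((A ^ k).mulVec x i) / ((A ^ (k - 1)).mulVec x i)

/-- `b_k(A,x) = min_i (A^k x)_i / (A^{k-1} x)_i` for `k ≥ 1`. -/
noncomputable def bSeq {n : ℕ} (A : Matrix (Fin n) (Fin n) ℝ) (x : Fin n → ℝ) (k : ℕ) : ℝ :=
  ⨅ i, ((A ^ k).mulVec x i) / ((A ^ (k - 1)).mulVec x i)

open Topology Finset

theorem Matrix.isRoot_charpoly_iff_exists_mulVec_eq_smul_s12 {K ι : Type*} [Field K] [Fintype ι]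
    [DecidableEq ι] (M : Matrix ι ι K) (μ : K) :
    M.charpoly.IsRoot μ ↔ ∃ v ≠ 0, M *ᵥ v = μ • v := by
  simp only [Polynomial.IsRoot, eval_charpoly, ← exists_mulVec_eq_zero_iff, sub_mulVec,
    scalar_apply, diagonal_const_mulVec, sub_eq_zero, eq_comm (b := μ • _)]

namespace Matrix

variable {ι : Type*} [Fintype ι] {A : Matrix ι ι ℝ}

theorem norm_eigenvalue_le_of_mulVec_le (hA : ∀ i j, 0 ≤ A i j) {y : ι → ℝ}
    (hy : ∀ i, 0 < y i) {a : ℝ} (hay : ∀ i, (A *ᵥ y) i ≤ a * y i) {μ : ℂ} {v : ι → ℂ} (hv : v ≠ 0)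
    (hμ : A.map (↑) *ᵥ v = μ • v) : ‖μ‖ ≤ a := by
  obtain ⟨j, hj⟩ := Function.ne_iff.mp hv
  have : Nonempty ι := ⟨j⟩
  obtain ⟨i, hi⟩ := Finite.exists_max fun i => ‖v i‖ / y i
  set c := ‖v i‖ / y i
  have hvc (j : ι) : ‖v j‖ ≤ c * y j := (div_le_iff₀ (hy j)).1 (hi j)
  have hc : 0 < c := (div_pos (norm_pos_iff.2 hj) (hy j)).trans_le (hi j)
  have hvi : ‖v i‖ = c * y i := (div_mul_cancel₀ _ (hy i).ne').symm
  refine le_of_mul_le_mul_right ?_ (mul_pos hc (hy i))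
  calc ‖μ‖ * (c * y i) = ‖∑ j, (A i j : ℂ) * v j‖ := by
        rw [← hvi, ← norm_mul, ← smul_eq_mul, ← Pi.smul_apply, ← hμ]; rfl
    _ ≤ ∑ j, A i j * ‖v j‖ := (norm_sum_le _ _).trans_eq <| by
        simp [abs_of_nonneg (hA i _)]
    _ ≤ ∑ j, A i j * (c * y j) := sum_le_sum fun j _ => mul_le_mul_of_nonneg_left (hvc j) (hA i j)
    _ = c * (A *ᵥ y) i := by simp only [mulVec, dotProduct, mul_sum, mul_left_comm]
    _ ≤ c * (a * y i) := mul_le_mul_of_nonneg_left (hay i) hc.le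
    _ = a * (c * y i) := mul_left_comm _ _ _

theorem mulVec_pos_of_nonneg_of_ne_zero (hA : ∀ i j, 0 < A i j) {v : ι → ℝ} (hv : 0 ≤ v)
    (hv0 : v ≠ 0) (i : ι) : 0 < (A *ᵥ v) i := by
  obtain ⟨j, hj⟩ := Function.ne_iff.mp hv0
  exact sum_pos' (fun k _ => mul_nonneg (hA i k).le (hv k)) ⟨j, mem_univ j,
    mul_pos (hA i j) ((hv j).lt_of_ne' hj)⟩

theorem mulVec_pos [Nonempty ι] (hA : ∀ i j, 0 < A i j) {v : ι → ℝ} (hv : ∀ i, 0 < v i) (i : ι) :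
    0 < (A *ᵥ v) i :=
  mulVec_pos_of_nonneg_of_ne_zero hA (fun j => (hv j).le)
    (Function.ne_iff.2 ⟨Classical.arbitrary ι, (hv _).ne'⟩) i

theorem pow_mulVec_pos [DecidableEq ι] [Nonempty ι] (hA : ∀ i j, 0 < A i j) {v : ι → ℝ}
    (hv : ∀ i, 0 < v i) (k : ℕ) (i : ι) : 0 < (A ^ k *ᵥ v) i := by
  induction k generalizing i with
  | zero => simpa using hv i
  | succ k ih => rw [pow_succ', ← mulVec_mulVec]; exact mulVec_pos hA ih i

noncomputable def maxRatio (A : Matrix ι ι ℝ) (y : ι → ℝ) : ℝ := ⨆ i, (A *ᵥ y) i / y i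

noncomputable def minRatio (A : Matrix ι ι ℝ) (y : ι → ℝ) : ℝ := ⨅ i, (A *ᵥ y) i / y i

variable {y : ι → ℝ}

theorem ratio_le_maxRatio (i : ι) : (A *ᵥ y) i / y i ≤ maxRatio A y :=
  le_ciSup (f := fun i => (A *ᵥ y) i / y i) (Set.finite_range _).bddAbove i

theorem minRatio_le_ratio (i : ι) : minRatio A y ≤ (A *ᵥ y) i / y i :=
  ciInf_le (f := fun i => (A *ᵥ y) i / y i) (Set.finite_range _).bddBelow i

theorem exists_maxRatio_eq [Nonempty ι] : ∃ i, maxRatio A y = (A *ᵥ y) i / y i := by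
  obtain ⟨i, hi⟩ := Finite.exists_max fun i => (A *ᵥ y) i / y i
  exact ⟨i, (ciSup_le hi).antisymm (ratio_le_maxRatio i)⟩

theorem exists_minRatio_eq [Nonempty ι] : ∃ i, minRatio A y = (A *ᵥ y) i / y i := by
  obtain ⟨i, hi⟩ := Finite.exists_min fun i => (A *ᵥ y) i / y i
  exact ⟨i, (minRatio_le_ratio i).antisymm (le_ciInf hi)⟩

theorem minRatio_le_maxRatio [Nonempty ι] : minRatio A y ≤ maxRatio A y :=
  (minRatio_le_ratio (Classical.arbitrary ι)).trans (ratio_le_maxRatio _)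

theorem maxRatio_smul {c : ℝ} (hc : c ≠ 0) : maxRatio A (c • y) = maxRatio A y := by
  simp only [maxRatio, mulVec_smul, Pi.smul_apply, smul_eq_mul, mul_div_mul_left _ _ hc]

theorem minRatio_smul {c : ℝ} (hc : c ≠ 0) : minRatio A (c • y) = minRatio A y := by
  simp only [minRatio, mulVec_smul, Pi.smul_apply, smul_eq_mul, mul_div_mul_left _ _ hc]

theorem continuousAt_maxRatio [Nonempty ι] (hy : ∀ i, y i ≠ 0) : ContinuousAt (maxRatio A) y := by
  have : maxRatio A = fun w => univ.sup' univ_nonempty fun i => (A *ᵥ w) i / w i := by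
    ext w; exact (sup'_univ_eq_ciSup _).symm
  rw [this]
  exact ContinuousAt.finset_sup'_apply _ fun i _ =>
    ContinuousAt.div (by fun_prop) (continuous_apply i).continuousAt (hy i)

theorem continuousAt_minRatio [Nonempty ι] (hy : ∀ i, y i ≠ 0) : ContinuousAt (minRatio A) y := by
  have : minRatio A = fun w => univ.inf' univ_nonempty fun i => (A *ᵥ w) i / w i := by
    ext w; exact (inf'_univ_eq_ciInf _).symm
  rw [this]
  exact ContinuousAt.finset_inf'_apply _ fun i _ =>
    ContinuousAt.div (by fun_prop) (continuous_apply i).continuousAt (hy i)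

theorem exists_tendsto_normalize_subseq {y : ℕ → ι → ℝ} (hy : ∀ k, 0 ≤ y k)
    (hy0 : ∀ k, y k ≠ 0) : ∃ v, 0 ≤ v ∧ v ≠ 0 ∧ ∃ φ : ℕ → ℕ, StrictMono φ ∧
      Tendsto (fun j => ‖y (φ j)‖⁻¹ • y (φ j)) atTop (𝓝 v) := by
  have hK : IsCompact (Metric.sphere (0 : ι → ℝ) 1 ∩ {v | 0 ≤ v}) :=
    (isCompact_sphere 0 1).inter_right (isClosed_le continuous_const continuous_id)
  have hmem (k : ℕ) : ‖y k‖⁻¹ • y k ∈ Metric.sphere (0 : ι → ℝ) 1 ∩ {v | 0 ≤ v} :=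
    ⟨by simp [norm_smul, hy0 k], smul_nonneg (by positivity) (hy k)⟩
  obtain ⟨v, ⟨hv1, hv⟩, φ, hφ, hlim⟩ := hK.tendsto_subseq hmem
  exact ⟨v, hv, ne_zero_of_mem_unit_sphere ⟨v, hv1⟩, φ, hφ, hlim⟩

variable [Nonempty ι]

theorem maxRatio_pos (hA : ∀ i j, 0 < A i j) (hy : ∀ i, 0 < y i) : 0 < maxRatio A y :=
  (div_pos (mulVec_pos hA hy _) (hy _)).trans_le (ratio_le_maxRatio (Classical.arbitrary ι))

theorem minRatio_pos (hA : ∀ i j, 0 < A i j) (hy : ∀ i, 0 < y i) : 0 < minRatio A y := by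
  obtain ⟨i, hi⟩ := exists_minRatio_eq (A := A) (y := y)
  exact hi ▸ div_pos (mulVec_pos hA hy i) (hy i)

theorem maxRatio_mulVec_lt_iff (hA : ∀ i j, 0 < A i j) (hy : ∀ i, 0 < y i) :
    maxRatio A (A *ᵥ y) < maxRatio A y ↔ A *ᵥ y ≠ maxRatio A y • y := by
  set a := maxRatio A y
  refine ⟨fun hlt heq => hlt.ne (by rw [heq, maxRatio_smul (maxRatio_pos hA hy).ne']),
    fun hne => ?_⟩
  have hle : 0 ≤ a • y - A *ᵥ y := fun i => sub_nonneg.2 <| by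
    simpa using (div_le_iff₀ (hy i)).1 (ratio_le_maxRatio (A := A) i)
  have hlt (i : ι) : (A *ᵥ (A *ᵥ y)) i < a * (A *ᵥ y) i := by
    simpa [mulVec_sub, mulVec_smul] using
      mulVec_pos_of_nonneg_of_ne_zero hA hle (sub_ne_zero.2 hne.symm) i
  obtain ⟨i, hi⟩ := exists_maxRatio_eq (A := A) (y := A *ᵥ y)
  rw [hi, div_lt_iff₀ (mulVec_pos hA hy i)]
  exact hlt i

theorem lt_minRatio_mulVec_iff (hA : ∀ i j, 0 < A i j) (hy : ∀ i, 0 < y i) :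
    minRatio A y < minRatio A (A *ᵥ y) ↔ A *ᵥ y ≠ minRatio A y • y := by
  set b := minRatio A y
  refine ⟨fun hlt heq => hlt.ne' (by rw [heq, minRatio_smul (minRatio_pos hA hy).ne']),
    fun hne => ?_⟩
  have hle : 0 ≤ A *ᵥ y - b • y := fun i => sub_nonneg.2 <| by
    simpa using (le_div_iff₀ (hy i)).1 (minRatio_le_ratio (A := A) i)
  have hlt (i : ι) : b * (A *ᵥ y) i < (A *ᵥ (A *ᵥ y)) i := by
    simpa [mulVec_sub, mulVec_smul] using
      mulVec_pos_of_nonneg_of_ne_zero hA hle (sub_ne_zero.2 hne) i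
  obtain ⟨i, hi⟩ := exists_minRatio_eq (A := A) (y := A *ᵥ y)
  rw [hi, lt_div_iff₀ (mulVec_pos hA hy i)]
  exact hlt i

theorem maxRatio_mulVec_le (hA : ∀ i j, 0 < A i j) (hy : ∀ i, 0 < y i) :
    maxRatio A (A *ᵥ y) ≤ maxRatio A y := by
  rcases eq_or_ne (A *ᵥ y) (maxRatio A y • y) with h | h
  · rw [h, maxRatio_smul (maxRatio_pos hA hy).ne']
  · exact ((maxRatio_mulVec_lt_iff hA hy).2 h).le

theorem minRatio_le_minRatio_mulVec (hA : ∀ i j, 0 < A i j) (hy : ∀ i, 0 < y i) :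
    minRatio A y ≤ minRatio A (A *ᵥ y) := by
  rcases eq_or_ne (A *ᵥ y) (minRatio A y • y) with h | h
  · rw [h, minRatio_smul (minRatio_pos hA hy).ne']
  · exact ((lt_minRatio_mulVec_iff hA hy).2 h).le

section Iterates

variable [DecidableEq ι] {x : ι → ℝ}

theorem antitone_maxRatio_pow_mulVec (hA : ∀ i j, 0 < A i j) (hx : ∀ i, 0 < x i) :
    Antitone fun k => maxRatio A (A ^ k *ᵥ x) :=
  antitone_nat_of_succ_le fun k => by
    simpa only [pow_succ', ← mulVec_mulVec] using maxRatio_mulVec_le hA (pow_mulVec_pos hA hx k)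

theorem monotone_minRatio_pow_mulVec (hA : ∀ i j, 0 < A i j) (hx : ∀ i, 0 < x i) :
    Monotone fun k => minRatio A (A ^ k *ᵥ x) :=
  monotone_nat_of_le_succ fun k => by
    simpa only [pow_succ', ← mulVec_mulVec] using
      minRatio_le_minRatio_mulVec hA (pow_mulVec_pos hA hx k)

theorem tendsto_maxRatio_pow_mulVec (hA : ∀ i j, 0 < A i j) (hx : ∀ i, 0 < x i) :
    Tendsto (fun k => maxRatio A (A ^ k *ᵥ x)) atTop
      (𝓝 (⨅ k, maxRatio A (A ^ k *ᵥ x))) :=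
  tendsto_atTop_ciInf (antitone_maxRatio_pow_mulVec hA hx) ⟨_, Set.forall_mem_range.2
    fun k => (monotone_minRatio_pow_mulVec hA hx k.zero_le).trans minRatio_le_maxRatio⟩

theorem tendsto_minRatio_pow_mulVec (hA : ∀ i j, 0 < A i j) (hx : ∀ i, 0 < x i) :
    Tendsto (fun k => minRatio A (A ^ k *ᵥ x)) atTop
      (𝓝 (⨆ k, minRatio A (A ^ k *ᵥ x))) :=
  tendsto_atTop_ciSup (monotone_minRatio_pow_mulVec hA hx) ⟨_, Set.forall_mem_range.2
    fun k => minRatio_le_maxRatio.trans (antitone_maxRatio_pow_mulVec hA hx k.zero_le)⟩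

theorem exists_pos_ratios_eq_limits (hA : ∀ i j, 0 < A i j) (hx : ∀ i, 0 < x i) :
    ∃ w : ι → ℝ, (∀ i, 0 < w i) ∧
      maxRatio A w = ⨅ k, maxRatio A (A ^ k *ᵥ x) ∧
      maxRatio A (A *ᵥ w) = ⨅ k, maxRatio A (A ^ k *ᵥ x) ∧
      minRatio A w = ⨆ k, minRatio A (A ^ k *ᵥ x) ∧
      minRatio A (A *ᵥ w) = ⨆ k, minRatio A (A ^ k *ᵥ x) := by
  have hy := pow_mulVec_pos hA hx
  have hy0 (k : ℕ) : A ^ k *ᵥ x ≠ 0 := Function.ne_iff.2 ⟨Classical.arbitrary ι, (hy k _).ne'⟩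
  obtain ⟨v, hv, hv0, φ, hφ, hlim⟩ :=
    exists_tendsto_normalize_subseq (y := (A ^ · *ᵥ x)) (fun k i => (hy k i).le) hy0
  have hpos (m : ℕ) (i : ι) : 0 < (A ^ (m + 1) *ᵥ v) i := by
    rw [pow_succ, ← mulVec_mulVec]
    exact pow_mulVec_pos hA (mulVec_pos_of_nonneg_of_ne_zero hA hv hv0) m i
  have hlim' (m : ℕ) : Tendsto (fun j => ‖A ^ φ j *ᵥ x‖⁻¹ • (A ^ (φ j + m) *ᵥ x)) atTop
      (𝓝 (A ^ m *ᵥ v)) := by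
    have hc : Continuous (A ^ m *ᵥ ·) := continuous_const.matrix_mulVec continuous_id
    simpa only [Function.comp_def, mulVec_smul, mulVec_mulVec, ← pow_add, add_comm m] using
      (hc.tendsto v).comp hlim
  have hscale (j : ℕ) : ‖A ^ φ j *ᵥ x‖⁻¹ ≠ 0 := inv_ne_zero (norm_ne_zero_iff.2 (hy0 _))
  have hmax (m : ℕ) : maxRatio A (A ^ (m + 1) *ᵥ v) = ⨅ k, maxRatio A (A ^ k *ᵥ x) := by
    refine tendsto_nhds_unique
      ((continuousAt_maxRatio fun i => (hpos m i).ne').tendsto.comp (hlim' (m + 1))) ?_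
    refine (((tendsto_maxRatio_pow_mulVec hA hx).comp (tendsto_add_atTop_nat (m + 1))).comp
      hφ.tendsto_atTop).congr fun j => ?_
    simp [maxRatio_smul (hscale j)]
  have hmin (m : ℕ) : minRatio A (A ^ (m + 1) *ᵥ v) = ⨆ k, minRatio A (A ^ k *ᵥ x) := by
    refine tendsto_nhds_unique
      ((continuousAt_minRatio fun i => (hpos m i).ne').tendsto.comp (hlim' (m + 1))) ?_
    refine (((tendsto_minRatio_pow_mulVec hA hx).comp (tendsto_add_atTop_nat (m + 1))).comp
      hφ.tendsto_atTop).congr fun j => ?_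
    simp [minRatio_smul (hscale j)]
  have hw1 : A ^ (0 + 1) *ᵥ v = A *ᵥ v := by simp
  have hw2 : A ^ (1 + 1) *ᵥ v = A *ᵥ (A *ᵥ v) := by simp [sq, mulVec_mulVec]
  exact ⟨A *ᵥ v, hw1 ▸ hpos 0, hw1 ▸ hmax 0, hw2 ▸ hmax 1, hw1 ▸ hmin 0, hw2 ▸ hmin 1⟩

theorem exists_pos_eigenvector_tendsto_ratio (hA : ∀ i j, 0 < A i j) (hx : ∀ i, 0 < x i) :
    ∃ w : ι → ℝ, ∃ L : ℝ, (∀ i, 0 < w i) ∧ A *ᵥ w = L • w ∧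
      Tendsto (fun k => maxRatio A (A ^ k *ᵥ x)) atTop (𝓝 L) ∧
      Tendsto (fun k => minRatio A (A ^ k *ᵥ x)) atTop (𝓝 L) := by
  obtain ⟨w, hw, hmax, hmax', hmin, hmin'⟩ := exists_pos_ratios_eq_limits hA hx
  have heig_max : A *ᵥ w = maxRatio A w • w :=
    not_not.1 fun h => ((maxRatio_mulVec_lt_iff hA hw).2 h).ne (hmax'.trans hmax.symm)
  have heig_min : A *ᵥ w = minRatio A w • w :=
    not_not.1 fun h => ((lt_minRatio_mulVec_iff hA hw).2 h).ne (hmin.trans hmin'.symm)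
  have hL : minRatio A w = maxRatio A w :=
    smul_left_injective ℝ (Function.ne_iff.2 ⟨Classical.arbitrary ι, (hw _).ne'⟩)
      (heig_min.symm.trans heig_max)
  refine ⟨w, _, hw, heig_max, hmax ▸ tendsto_maxRatio_pow_mulVec hA hx, ?_⟩
  simpa only [← hmin, hL] using tendsto_minRatio_pow_mulVec hA hx

end Iterates

end Matrix

section Perron

variable {n : ℕ} [Nonempty (Fin n)] {A : Matrix (Fin n) (Fin n) ℝ} {y : Fin n → ℝ} {c : ℝ}

theorem perronValue_eq_of_mulVec_eq_smul_s12 (hA : ∀ i j, 0 ≤ A i j) (hy : ∀ i, 0 < y i)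
    (h : A *ᵥ y = c • y) : perronValue A = c := by
  obtain ⟨i⟩ := ‹Nonempty (Fin n)›
  have hAy : 0 ≤ (A *ᵥ y) i := by
    simp only [mulVec, dotProduct]
    exact sum_nonneg fun j _ => mul_nonneg (hA i j) (hy j).le
  have hc : 0 ≤ c := nonneg_of_mul_nonneg_left (by simpa [h] using hAy) (hy i)
  refine IsGreatest.csSup_eq ⟨⟨c, (isRoot_charpoly_iff_exists_mulVec_eq_smul_s12 _ _).2
    ⟨(↑) ∘ y, Function.ne_iff.2 ⟨i, by simpa using (hy i).ne'⟩, ?_⟩,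
      by simp [abs_of_nonneg hc]⟩, ?_⟩
  · ext j
    refine (RingHom.map_mulVec Complex.ofRealHom A y j).symm.trans ?_
    simp [h]
  · rintro _ ⟨μ, hμ, rfl⟩
    obtain ⟨v, hv, hμv⟩ := (isRoot_charpoly_iff_exists_mulVec_eq_smul_s12 _ _).1 hμ
    exact norm_eigenvalue_le_of_mulVec_le hA hy (fun j => (congrFun h j).le) hv hμv

theorem isPerronVector_of_mulVec_eq_smul (hA : ∀ i j, 0 ≤ A i j) (hy : ∀ i, 0 < y i)
    (h : A *ᵥ y = c • y) : IsPerronVector A y :=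
  ⟨Function.ne_iff.2 ⟨Classical.arbitrary _, (hy _).ne'⟩, by
    rw [perronValue_eq_of_mulVec_eq_smul_s12 hA hy h, h]⟩

end Perron

/-- Let `A` be an `n × n` entrywise positive real matrix and `x` entrywise
positive. If `A^r x` is not a Perron vector of `A` for every `r ≥ 0`, then `(a_k(A,x))_{k≥1}`
is strictly decreasing, `(b_k(A,x))_{k≥1}` is strictly increasing, and both sequences
converge to the Perron value `ρ(A)`. -/
theorem aSeq_strictAnti_bSeq_strictMono_tendsto_perron {n : ℕ} (hn : 0 < n)
    (A : Matrix (Fin n) (Fin n) ℝ) (x : Fin n → ℝ)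
    (hA : ∀ i j, 0 < A i j) (hx : ∀ i, 0 < x i)
    (hnp : ∀ r : ℕ, ¬ IsPerronVector A ((A ^ r).mulVec x)) :
    (∀ k : ℕ, 1 ≤ k → aSeq A x (k + 1) < aSeq A x k) ∧
    (∀ k : ℕ, 1 ≤ k → bSeq A x k < bSeq A x (k + 1)) ∧
    Tendsto (fun k : ℕ => aSeq A x k) atTop (nhds (perronValue A)) ∧
    Tendsto (fun k : ℕ => bSeq A x k) atTop (nhds (perronValue A)) := by
  have : Nonempty (Fin n) := ⟨⟨0, hn⟩⟩
  have hA₀ (i j : Fin n) : 0 ≤ A i j := (hA i j).le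
  have hy := pow_mulVec_pos hA hx
  have haSeq (k : ℕ) : aSeq A x (k + 1) = maxRatio A (A ^ k *ᵥ x) := by
    simp only [aSeq, maxRatio, pow_succ', ← mulVec_mulVec, Nat.add_sub_cancel]
  have hbSeq (k : ℕ) : bSeq A x (k + 1) = minRatio A (A ^ k *ᵥ x) := by
    simp only [bSeq, minRatio, pow_succ', ← mulVec_mulVec, Nat.add_sub_cancel]
  have hnot_eig (k : ℕ) (c : ℝ) : A *ᵥ (A ^ k *ᵥ x) ≠ c • (A ^ k *ᵥ x) := fun h =>
    hnp k (isPerronVector_of_mulVec_eq_smul hA₀ (hy k) h)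
  obtain ⟨w, L, hw, hwL, hα, hβ⟩ := exists_pos_eigenvector_tendsto_ratio hA hx
  rw [perronValue_eq_of_mulVec_eq_smul_s12 hA₀ hw hwL]
  refine ⟨fun k hk => ?_, fun k hk => ?_, ?_, ?_⟩
  · obtain ⟨k, rfl⟩ := Nat.exists_eq_add_of_le' hk
    rw [haSeq, haSeq, pow_succ', ← mulVec_mulVec]
    exact (maxRatio_mulVec_lt_iff hA (hy k)).2 (hnot_eig k _)
  · obtain ⟨k, rfl⟩ := Nat.exists_eq_add_of_le' hk
    rw [hbSeq, hbSeq, pow_succ', ← mulVec_mulVec]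
    exact (lt_minRatio_mulVec_iff hA (hy k)).2 (hnot_eig k _)
  · exact (tendsto_add_atTop_iff_nat 1).1 (by simpa only [haSeq] using hα)
  · exact (tendsto_add_atTop_iff_nat 1).1 (by simpa only [hbSeq] using hβ)
end
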